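/- arXiv:1511.06949 — 4 statements merged into one kernel-verified Lean document; each statement's English description precedes it below -/
import Mathlib

section
/- Let p be holomorphic on the unit disk D with p(0) = 1 and Taylor coefficients b_n, and let 0 ≤ α < 1. If Re p(z) ≥ α for all z ∈ D, then |b_2 - b_1²/(1-α)| ≤ 2(1-α). -/
/-!
Put `q = p - α`, so `Re q ≥ 0` and `Re q(0) = 1 - α`. For `0 < r < 1` the function
`g(θ) = Re q(r e^{iθ})` is a nonnegative weight of mass `M = 2π (1 - α)`, and Cauchy's formula
(the conjugate half of `Re q` contributing nothing) gives `∫ g e^{-iθ} = π r b₁` and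
`∫ g e^{-2iθ} = π r² b₂`. For any nonnegative weight of mass `M` and unimodular `e`, with
`A = ∫ g e` and `B = ∫ g e²`, one has `M (M B - 2 A²) = ∫ g ((M e - A)² - A²)`, and bounding the
integrand by `‖M e - A‖² + ‖A‖²`, whose weighted integral is `M³`, gives `‖M B - 2 A²‖ ≤ M²`.
This yields `r² ‖(1 - α) b₂ - b₁²‖ ≤ 2 (1 - α)²`; let `r → 1`.
-/

open Complex Metric MeasureTheory Filter Topology
open scoped Real Nat ComplexConjugate

noncomputable def taylorCoeff (f : ℂ → ℂ) (n : ℕ) : ℂ := iteratedDeriv n f 0 / n !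

section CircleMoments

variable {f : ℂ → ℂ} {r : ℝ}

lemma circleIntegral_zpow_mul (hr : r ≠ 0) (k : ℤ) :
    (∮ z in C(0, r), z ^ k * f z)
      = I * (r : ℂ) ^ (k + 1) * ∫ θ in 0..2 * π, exp ((k + 1) * θ * I) * f (circleMap 0 r θ) := by
  rw [circleIntegral, ← intervalIntegral.integral_const_mul]
  refine intervalIntegral.integral_congr fun θ _ ↦ ?_
  have hr' : (r : ℂ) ≠ 0 := ofReal_ne_zero.2 hr
  rw [deriv_circleMap, circleMap_zero, smul_eq_mul, mul_zpow, zpow_add_one₀ hr',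
    show ((k : ℂ) + 1) * θ * I = k * (θ * I) + θ * I by ring, exp_add, exp_int_mul]
  ring

lemma integral_exp_neg_mul_circleMap (hr : 0 < r) (hf : DifferentiableOn ℂ f (closedBall 0 r))
    (n : ℕ) :
    ∫ θ in 0..2 * π, exp (-(n * θ * I)) * f (circleMap 0 r θ)
      = 2 * π * r ^ n * taylorCoeff f n := by
  have hcauchy := hf.circleIntegral_one_div_sub_center_pow_smul hr n
  have hzpow : ∀ z : ℂ, (1 / (z - 0) ^ (n + 1)) • f z = z ^ (-(n + 1 : ℤ)) * f z := fun z ↦ by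
    rw [sub_zero, smul_eq_mul, zpow_neg, one_div]; norm_cast
  simp_rw [hzpow] at hcauchy
  rw [circleIntegral_zpow_mul hr.ne', show -((n : ℤ) + 1) + 1 = -n by ring, zpow_neg,
    zpow_natCast, smul_eq_mul] at hcauchy
  push_cast at hcauchy
  simp_rw [show ∀ θ : ℝ, (-((n : ℂ) + 1) + 1) * θ * I = -(n * θ * I) from fun θ ↦ by ring]
    at hcauchy
  have hr' : (r : ℂ) ^ n ≠ 0 := pow_ne_zero _ (ofReal_ne_zero.2 hr.ne')
  rw [taylorCoeff]
  field_simp at hcauchy ⊢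
  linear_combination hcauchy

lemma integral_exp_mul_circleMap (hr : 0 < r) (hf : DifferentiableOn ℂ f (closedBall 0 r))
    (n : ℕ) :
    ∫ θ in 0..2 * π, exp ((n + 1) * θ * I) * f (circleMap 0 r θ) = 0 := by
  have hzero : (∮ z in C(0, r), z ^ (n : ℤ) * f z) = 0 := by
    simp_rw [zpow_natCast]
    exact (((differentiableOn_pow n).mul hf).mono closure_ball_subset_closedBall).diffContOnCl
      |>.circleIntegral_eq_zero hr.le
  rw [circleIntegral_zpow_mul hr.ne', mul_eq_zero] at hzero
  simpa using hzero.resolve_left (mul_ne_zero I_ne_zero (zpow_ne_zero _ (ofReal_ne_zero.2 hr.ne')))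

lemma continuous_comp_circleMap (hr : 0 ≤ r) (hf : ContinuousOn f (closedBall 0 r)) :
    Continuous fun θ ↦ f (circleMap 0 r θ) :=
  hf.comp_continuous (continuous_circleMap 0 r) (circleMap_mem_closedBall 0 hr)

lemma integral_re_circleMap (hr : 0 < r) (hf : DifferentiableOn ℂ f (closedBall 0 r)) :
    ∫ θ in 0..2 * π, (f (circleMap 0 r θ)).re = 2 * π * (f 0).re := by
  have h := integral_exp_neg_mul_circleMap hr hf 0
  simp only [CharP.cast_eq_zero, zero_mul, neg_zero, exp_zero, one_mul, pow_zero, mul_one,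
    taylorCoeff, iteratedDeriv_zero, Nat.factorial_zero, Nat.cast_one, div_one] at h
  have hint := (continuous_comp_circleMap hr.le hf.continuousOn).intervalIntegrable
    (μ := volume) 0 (2 * π)
  calc ∫ θ in 0..2 * π, (f (circleMap 0 r θ)).re = (∫ θ in 0..2 * π, f (circleMap 0 r θ)).re :=
        intervalIntegral.intervalIntegral_re hint
    _ = 2 * π * (f 0).re := by rw [h]; simp

lemma integral_re_mul_exp_neg_circleMap (hr : 0 < r) (hf : DifferentiableOn ℂ f (closedBall 0 r))
    {n : ℕ} (hn : n ≠ 0) :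
    ∫ θ in 0..2 * π, ((f (circleMap 0 r θ)).re : ℂ) * exp (-(n * θ * I))
      = π * r ^ n * taylorCoeff f n := by
  obtain ⟨m, rfl⟩ := Nat.exists_eq_add_one_of_ne_zero hn
  have hc := continuous_comp_circleMap hr.le hf.continuousOn
  have hsplit : ∀ θ : ℝ, ((f (circleMap 0 r θ)).re : ℂ) * exp (-((m + 1 : ℕ) * θ * I))
      = (exp (-((m + 1 : ℕ) * θ * I)) * f (circleMap 0 r θ)
        + conj (exp ((m + 1) * θ * I) * f (circleMap 0 r θ))) / 2 := fun θ ↦ by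
    rw [re_eq_add_conj, map_mul, ← exp_conj]
    simp only [map_mul, map_add, map_natCast, map_one, conj_ofReal, conj_I]
    push_cast
    ring_nf
  simp_rw [hsplit]
  rw [intervalIntegral.integral_div, intervalIntegral.integral_add,
    intervalIntegral.intervalIntegral_conj, integral_exp_neg_mul_circleMap hr hf,
    integral_exp_mul_circleMap hr hf, map_zero]
  · ring
  · exact (Continuous.mul (by fun_prop) hc).intervalIntegrable _ _
  · exact (continuous_conj.comp (Continuous.mul (by fun_prop) hc)).intervalIntegrable _ _

end CircleMoments

lemma norm_ofReal_mul_sub_sq_sub_sq_le (M : ℝ) {z : ℂ} (hz : ‖z‖ = 1) (A : ℂ) :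
    ‖((M : ℂ) * z - A) ^ 2 - A ^ 2‖ ≤ M ^ 2 + 2 * ‖A‖ ^ 2 - 2 * M * (z * conj A).re := by
  have h : ‖(M : ℂ) * z - A‖ ^ 2 = M ^ 2 + ‖A‖ ^ 2 - 2 * M * (z * conj A).re := by
    rw [← normSq_eq_norm_sq, normSq_sub, normSq_mul, normSq_ofReal, normSq_eq_norm_sq z, hz,
      normSq_eq_norm_sq A, mul_assoc (M : ℂ), re_ofReal_mul]
    ring
  calc ‖((M : ℂ) * z - A) ^ 2 - A ^ 2‖ ≤ ‖(M : ℂ) * z - A‖ ^ 2 + ‖A‖ ^ 2 :=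
        (norm_sub_le _ _).trans_eq (by rw [norm_pow, norm_pow])
    _ = _ := by rw [h]; ring

section WeightedMoments

variable {X : Type*} [MeasurableSpace X] {μ : Measure X} {g : X → ℝ} {e : X → ℂ}

theorem integral_mul_norm_integral_mul_sq_sub_two_mul_sq_le (hg : Integrable g μ) (hg0 : 0 ≤ g)
    (he : AEStronglyMeasurable e μ) (he1 : ∀ x, ‖e x‖ = 1) :
    (∫ x, g x ∂μ) *
        ‖((∫ x, g x ∂μ : ℝ) : ℂ) * (∫ x, g x * e x ^ 2 ∂μ) - 2 * (∫ x, g x * e x ∂μ) ^ 2‖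
      ≤ (∫ x, g x ∂μ) ^ 3 := by
  set M := ∫ x, g x ∂μ
  set A := ∫ x, (g x : ℂ) * e x ∂μ
  set B := ∫ x, (g x : ℂ) * e x ^ 2 ∂μ
  have hM : 0 ≤ M := integral_nonneg hg0
  have hge : Integrable (fun x ↦ (g x : ℂ) * e x) μ :=
    hg.ofReal.mul_bdd he (ae_of_all _ fun x ↦ (he1 x).le)
  have hge2 : Integrable (fun x ↦ (g x : ℂ) * e x ^ 2) μ :=
    hg.ofReal.mul_bdd (c := 1) (he.pow 2) (ae_of_all _ fun x ↦ by simp [he1])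
  have hre_int : Integrable (fun x ↦ g x * (e x * conj A).re) μ := by
    simpa only [← re_ofReal_mul, mul_assoc, RCLike.re_to_complex]
      using (hge.mul_const (conj A)).re
  have hre : ∫ x, g x * (e x * conj A).re ∂μ = ‖A‖ ^ 2 := by
    simp_rw [← re_ofReal_mul, ← mul_assoc]
    calc ∫ x, ((g x : ℂ) * e x * conj A).re ∂μ = (∫ x, (g x : ℂ) * e x * conj A ∂μ).re :=
          integral_re (hge.mul_const _)
      _ = ‖A‖ ^ 2 := by rw [integral_mul_const, mul_conj, normSq_eq_norm_sq, ofReal_re]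
  have hmoment : (M : ℂ) * (M * B - 2 * A ^ 2)
      = ∫ x, (g x : ℂ) * ((M * e x - A) ^ 2 - A ^ 2) ∂μ := by
    have h : ∀ x, (g x : ℂ) * ((M * e x - A) ^ 2 - A ^ 2)
        = M ^ 2 * ((g x : ℂ) * e x ^ 2) - 2 * M * A * ((g x : ℂ) * e x) := fun x ↦ by ring
    simp_rw [h]
    rw [integral_sub (hge2.const_mul _) (hge.const_mul _), integral_const_mul, integral_const_mul]
    ring
  have hsplit : (fun x ↦ g x * (M ^ 2 + 2 * ‖A‖ ^ 2 - 2 * M * (e x * conj A).re))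
      = fun x ↦ (M ^ 2 + 2 * ‖A‖ ^ 2) * g x - 2 * M * (g x * (e x * conj A).re) := by
    ext x; ring
  have hbound_int : Integrable
      (fun x ↦ g x * (M ^ 2 + 2 * ‖A‖ ^ 2 - 2 * M * (e x * conj A).re)) μ :=
    hsplit ▸ (hg.const_mul _).sub (hre_int.const_mul _)
  have hmass : ∫ x, g x * (M ^ 2 + 2 * ‖A‖ ^ 2 - 2 * M * (e x * conj A).re) ∂μ = M ^ 3 := by
    rw [hsplit, integral_sub (hg.const_mul _) (hre_int.const_mul _), integral_const_mul,
      integral_const_mul, hre]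
    ring
  have hbound : ∀ x, ‖(g x : ℂ) * ((M * e x - A) ^ 2 - A ^ 2)‖
      ≤ g x * (M ^ 2 + 2 * ‖A‖ ^ 2 - 2 * M * (e x * conj A).re) := fun x ↦ by
    rw [norm_mul, norm_real, Real.norm_of_nonneg (hg0 x)]
    exact mul_le_mul_of_nonneg_left (norm_ofReal_mul_sub_sq_sub_sq_le M (he1 x) A) (hg0 x)
  calc M * ‖(M : ℂ) * B - 2 * A ^ 2‖ = ‖∫ x, (g x : ℂ) * ((M * e x - A) ^ 2 - A ^ 2) ∂μ‖ := by
        rw [← hmoment, norm_mul, norm_real, Real.norm_of_nonneg hM]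
    _ ≤ M ^ 3 := hmass ▸ norm_integral_le_of_norm_le hbound_int (ae_of_all _ hbound)

theorem norm_integral_mul_integral_mul_sq_sub_two_mul_sq_le (hg : Integrable g μ) (hg0 : 0 ≤ g)
    (he : AEStronglyMeasurable e μ) (he1 : ∀ x, ‖e x‖ = 1) :
    ‖((∫ x, g x ∂μ : ℝ) : ℂ) * (∫ x, g x * e x ^ 2 ∂μ) - 2 * (∫ x, g x * e x ∂μ) ^ 2‖
      ≤ (∫ x, g x ∂μ) ^ 2 := by
  obtain hM | hM := (integral_nonneg hg0).eq_or_lt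
  · have hg_ae : g =ᵐ[μ] 0 := (integral_eq_zero_iff_of_nonneg hg0 hg).1 hM.symm
    have hA : ∫ x, (g x : ℂ) * e x ∂μ = 0 :=
      integral_eq_zero_of_ae (hg_ae.mono fun x hx ↦ by simp [hx])
    simp [← hM, hA]
  refine le_of_mul_le_mul_left ?_ hM
  calc _ ≤ (∫ x, g x ∂μ) ^ 3 :=
        integral_mul_norm_integral_mul_sq_sub_two_mul_sq_le hg hg0 he he1
    _ = _ := by ring

end WeightedMoments

theorem sq_mul_norm_re_mul_taylorCoeff_two_sub_sq_le {f : ℂ → ℂ} {r : ℝ} (hr : 0 < r)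
    (hf : DifferentiableOn ℂ f (closedBall 0 r)) (hre : ∀ z ∈ sphere (0 : ℂ) r, 0 ≤ (f z).re) :
    r ^ 2 * ‖(f 0).re * taylorCoeff f 2 - taylorCoeff f 1 ^ 2‖ ≤ 2 * (f 0).re ^ 2 := by
  set g : ℝ → ℝ := fun θ ↦ (f (circleMap 0 r θ)).re
  set e : ℝ → ℂ := fun θ ↦ exp (-(θ * I))
  have hg : Continuous g := continuous_re.comp (continuous_comp_circleMap hr.le hf.continuousOn)
  have hmoments := norm_integral_mul_integral_mul_sq_sub_two_mul_sq_le
    (μ := volume.restrict (Set.Ioc 0 (2 * π))) (g := g) (e := e) hg.integrableOn_Ioc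
    (fun θ ↦ hre _ (circleMap_mem_sphere 0 hr.le θ))
    (by fun_prop : Continuous e).aestronglyMeasurable
    (fun θ ↦ by simpa [e] using norm_exp_ofReal_mul_I (-θ))
  simp only [← intervalIntegral.integral_of_le Real.two_pi_pos.le] at hmoments
  have hmass : ∫ θ in 0..2 * π, g θ = 2 * π * (f 0).re := integral_re_circleMap hr hf
  have hA : ∫ θ in 0..2 * π, (g θ : ℂ) * e θ = π * r * taylorCoeff f 1 := by
    simpa [g, e] using integral_re_mul_exp_neg_circleMap hr hf one_ne_zero
  have hB : ∫ θ in 0..2 * π, (g θ : ℂ) * e θ ^ 2 = π * r ^ 2 * taylorCoeff f 2 := by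
    have he2 : ∀ θ : ℝ, e θ ^ 2 = exp (-((2 : ℕ) * θ * I)) := fun θ ↦ by
      rw [← exp_nat_mul]; push_cast; ring_nf
    simp_rw [he2]
    exact integral_re_mul_exp_neg_circleMap hr hf two_ne_zero
  rw [hmass, hA, hB, show ((2 * π * (f 0).re : ℝ) : ℂ) * (π * r ^ 2 * taylorCoeff f 2)
      - 2 * (π * r * taylorCoeff f 1) ^ 2
      = (2 * π ^ 2 * r ^ 2 : ℝ) * ((f 0).re * taylorCoeff f 2 - taylorCoeff f 1 ^ 2) by
    push_cast; ring, norm_mul, norm_real, Real.norm_of_nonneg (by positivity)] at hmoments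
  refine le_of_mul_le_mul_left ?_ (by positivity : (0 : ℝ) < 2 * π ^ 2)
  linear_combination hmoments

theorem norm_re_mul_taylorCoeff_two_sub_sq_le {f : ℂ → ℂ} (hf : DifferentiableOn ℂ f (ball 0 1))
    (hre : ∀ z ∈ ball (0 : ℂ) 1, 0 ≤ (f z).re) :
    ‖(f 0).re * taylorCoeff f 2 - taylorCoeff f 1 ^ 2‖ ≤ 2 * (f 0).re ^ 2 := by
  have hradius : ∀ᶠ r in 𝓝[<] (1 : ℝ),
      r ^ 2 * ‖(f 0).re * taylorCoeff f 2 - taylorCoeff f 1 ^ 2‖ ≤ 2 * (f 0).re ^ 2 :=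
    Filter.mem_of_superset (Ioo_mem_nhdsLT one_pos) fun r ⟨hr0, hr1⟩ ↦
      sq_mul_norm_re_mul_taylorCoeff_two_sub_sq_le hr0 (hf.mono (closedBall_subset_ball hr1))
        fun z hz ↦ hre z (sphere_subset_ball hr1 hz)
  have hlim : Tendsto (fun r : ℝ ↦ r ^ 2 * ‖(f 0).re * taylorCoeff f 2 - taylorCoeff f 1 ^ 2‖)
      (𝓝[<] 1) (𝓝 (1 ^ 2 * ‖(f 0).re * taylorCoeff f 2 - taylorCoeff f 1 ^ 2‖)) :=
    ((continuous_pow 2).mul continuous_const).tendsto 1 |>.mono_left nhdsWithin_le_nhds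
  simpa using le_of_tendsto hlim hradius

theorem stmt_3_general (α : ℝ) (hα1 : α < 1)
    (p : ℂ → ℂ) (hp : DifferentiableOn ℂ p (ball (0:ℂ) 1))
    (h0 : p 0 = 1)
    (b : ℕ → ℂ) (hb : ∀ n, b n = iteratedDeriv n p 0 / (Nat.factorial n))
    (hre : ∀ z ∈ ball (0:ℂ) 1, α ≤ (p z).re) :
    ‖b 2 - b 1 ^ 2 / (1 - (α:ℂ))‖ ≤ 2 * (1 - α) := by
  set q : ℂ → ℂ := fun z ↦ -(α : ℂ) + p z
  have hq : DifferentiableOn ℂ q (ball 0 1) := (differentiableOn_const _).add hp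
  have hq0 : (q 0).re = 1 - α := by
    simp only [q, h0, add_re, neg_re, ofReal_re, one_re]; ring
  have hqre : ∀ z ∈ ball (0 : ℂ) 1, 0 ≤ (q z).re := fun z hz ↦ by simp [q, hre z hz]
  have hcoeff : ∀ n, n ≠ 0 → taylorCoeff q n = b n := fun n hn ↦ by
    rw [taylorCoeff, iteratedDeriv_const_add (Nat.pos_of_ne_zero hn), hb]
  have hbound := norm_re_mul_taylorCoeff_two_sub_sq_le hq hqre
  rw [hq0, hcoeff 1 one_ne_zero, hcoeff 2 two_ne_zero] at hbound
  have hα : 0 < 1 - α := sub_pos.2 hα1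
  have hαc : (1 : ℂ) - α ≠ 0 := by exact_mod_cast hα.ne'
  have hnorm : ‖(1 : ℂ) - α‖ = 1 - α := by
    rw [← ofReal_one, ← ofReal_sub, norm_real, Real.norm_of_nonneg hα.le]
  push_cast at hbound
  calc ‖b 2 - b 1 ^ 2 / (1 - (α : ℂ))‖ = ‖(1 - (α : ℂ)) * b 2 - b 1 ^ 2‖ / ‖(1 : ℂ) - α‖ := by
        rw [← norm_div, sub_div, mul_div_cancel_left₀ _ hαc]
    _ ≤ 2 * (1 - α) ^ 2 / (1 - α) := by rw [hnorm]; gcongr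
    _ = 2 * (1 - α) := by field_simp

theorem stmt_3 (α : ℝ) (hα0 : 0 ≤ α) (hα1 : α < 1)
    (p : ℂ → ℂ) (hp : DifferentiableOn ℂ p (ball (0:ℂ) 1))
    (h0 : p 0 = 1)
    (b : ℕ → ℂ) (hb : ∀ n, b n = iteratedDeriv n p 0 / (Nat.factorial n))
    (hre : ∀ z ∈ ball (0:ℂ) 1, α ≤ (p z).re) :
    ‖b 2 - b 1 ^ 2 / (1 - (α:ℂ))‖ ≤ 2 * (1 - α) :=
  stmt_3_general α hα1 p hp h0 b hb hre
end

section
/- If f(z) = a_0 + ∑_{n≥1} a_n z^n is holomorphic on the unit disk D and maps D into D, then |a_n| ≤ 1 - |a_0|² for every n ≥ 1. -/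
open Complex Metric

/-!
Averaging `f` over the rotations `z ↦ ζ ^ j * z` by the `n`-th roots of unity gives a
holomorphic self-map `g` of the disc whose Taylor coefficients at `0` are those of `f` at indices
divisible by `n` and zero elsewhere. Hence `g - a₀` vanishes to order `n`, and composing `g` with
the disc automorphism `w ↦ (w - a₀) / (1 - conj a₀ * w)` yields, by the Leibniz rule, a self-map
of the disc whose `n`-th coefficient is `aₙ / (1 - ‖a₀‖ ^ 2)`. The Cauchy estimate bounds that
coefficient by `1`.
-/

open ComplexConjugate Filter Finset Topology
open scoped Nat

theorem norm_iteratedDeriv_le_of_forall_mem_ball_norm_le {E : Type*} [NormedAddCommGroup E]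
    [NormedSpace ℂ E] [CompleteSpace E] {g : ℂ → E} {c : ℂ} {R M : ℝ}
    (hR : 0 < R) (hg : DifferentiableOn ℂ g (ball c R)) (hM : ∀ z ∈ ball c R, ‖g z‖ ≤ M)
    (n : ℕ) : ‖iteratedDeriv n g c‖ ≤ n ! * M / R ^ n := by
  have hlim : Tendsto (fun r : ℝ ↦ n ! * M / r ^ n) (𝓝[<] R) (𝓝 (n ! * M / R ^ n)) :=
    ((continuousAt_const.div (continuousAt_id.pow n) (pow_ne_zero n hR.ne')).tendsto).mono_left
      nhdsWithin_le_nhds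
  refine ge_of_tendsto hlim ?_
  filter_upwards [Ioo_mem_nhdsLT hR] with r ⟨hr0, hrR⟩
  exact norm_iteratedDeriv_le_of_forall_mem_sphere_norm_le n hr0
    (hg.diffContOnCl_ball (closedBall_subset_ball hrR))
    fun z hz ↦ hM z (sphere_subset_closedBall.trans (closedBall_subset_ball hrR) hz)

theorem iteratedDeriv_mul_eq_of_iteratedDeriv_eq_zero {𝕜 𝔸 : Type*}
    [NontriviallyNormedField 𝕜] [NormedRing 𝔸] [NormedAlgebra 𝕜 𝔸] {u v : 𝕜 → 𝔸} {x : 𝕜} {n : ℕ}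
    (hu : ContDiffAt 𝕜 n u x) (hv : ContDiffAt 𝕜 n v x)
    (hvanish : ∀ i < n, iteratedDeriv i u x = 0) :
    iteratedDeriv n (u * v) x = iteratedDeriv n u x * v x := by
  rw [iteratedDeriv_mul hu hv, sum_range_succ,
    sum_eq_zero fun i hi ↦ by rw [hvanish i (mem_range.1 hi), mul_zero, zero_mul]]
  simp

theorem norm_sub_le_norm_one_sub_conj_mul {v w : ℂ} (hv : ‖v‖ ≤ 1) (hw : ‖w‖ ≤ 1) :
    ‖w - v‖ ≤ ‖1 - conj v * w‖ := by
  have key : ‖1 - conj v * w‖ ^ 2 - ‖w - v‖ ^ 2 = (1 - ‖v‖ ^ 2) * (1 - ‖w‖ ^ 2) := by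
    simp only [← normSq_eq_norm_sq, normSq_apply, sub_re, sub_im, mul_re, mul_im, one_re,
      one_im, conj_re, conj_im]
    ring
  have : 0 ≤ (1 - ‖v‖ ^ 2) * (1 - ‖w‖ ^ 2) :=
    mul_nonneg (by nlinarith [norm_nonneg v]) (by nlinarith [norm_nonneg w])
  exact le_of_sq_le_sq (by linarith) (norm_nonneg _)

theorem one_sub_conj_mul_ne_zero {v w : ℂ} (hv : ‖v‖ < 1) (hw : ‖w‖ ≤ 1) :
    1 - conj v * w ≠ 0 := by
  refine sub_ne_zero.2 fun h ↦ ?_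
  have : ‖conj v * w‖ < 1 := by
    rw [norm_mul, norm_conj]; nlinarith [norm_nonneg v, norm_nonneg w]
  simp [← h] at this

theorem iteratedDeriv_comp_const_mul_zero {f : ℂ → ℂ} {R : ℝ} (hR : 0 < R)
    (hf : DifferentiableOn ℂ f (ball 0 R)) {c : ℂ} (hc : ‖c‖ ≤ 1) (k : ℕ) :
    iteratedDeriv k (fun z ↦ f (c * z)) 0 = c ^ k * iteratedDeriv k f 0 := by
  have hmaps : Set.MapsTo (c * ·) (ball (0 : ℂ) R) (ball 0 R) := fun z hz ↦ by
    simp only [mem_ball_zero_iff, norm_mul] at hz ⊢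
    nlinarith [norm_nonneg c, norm_nonneg z]
  have h0 : (0 : ℂ) ∈ ball 0 R := mem_ball_self hR
  have := iteratedDerivWithin_comp_const_smul h0 isOpen_ball.uniqueDiffOn
    (hf.contDiffOn isOpen_ball (n := k)) c hmaps
  rwa [iteratedDerivWithin_of_isOpen isOpen_ball h0, mul_zero,
    iteratedDerivWithin_of_isOpen isOpen_ball h0, smul_eq_mul] at this

theorem IsPrimitiveRoot.sum_range_pow_pow_eq {ζ : ℂ} {n : ℕ} (hζ : IsPrimitiveRoot ζ n)
    (k : ℕ) :
    ∑ j ∈ range n, (ζ ^ j) ^ k = if n ∣ k then (n : ℂ) else 0 := by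
  simp_rw [← pow_mul, mul_comm _ k, pow_mul]
  split_ifs with hk
  · simp [(hζ.pow_eq_one_iff_dvd k).2 hk]
  · rw [geom_sum_eq (mt (hζ.pow_eq_one_iff_dvd k).1 hk), ← pow_mul, mul_comm, pow_mul,
      hζ.pow_eq_one, one_pow, sub_self, zero_div]

noncomputable def rotationAverage (ζ : ℂ) (n : ℕ) (f : ℂ → ℂ) (z : ℂ) : ℂ :=
  (n : ℂ)⁻¹ * ∑ j ∈ range n, f (ζ ^ j * z)

section rotationAverage

variable {ζ : ℂ} {n : ℕ} {f : ℂ → ℂ} {R : ℝ}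

theorem mapsTo_mul_pow_ball (hζ : IsPrimitiveRoot ζ n) (hn : n ≠ 0) (j : ℕ) :
    Set.MapsTo (ζ ^ j * ·) (ball (0 : ℂ) R) (ball 0 R) := fun z hz ↦ by
  simpa [norm_mul, norm_pow, hζ.norm'_eq_one hn] using hz

theorem differentiableOn_rotationAverage (hζ : IsPrimitiveRoot ζ n) (hn : n ≠ 0)
    (hf : DifferentiableOn ℂ f (ball 0 R)) :
    DifferentiableOn ℂ (rotationAverage ζ n f) (ball 0 R) := by
  refine (differentiableOn_const _).mul (DifferentiableOn.fun_sum fun j _ ↦ ?_)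
  exact hf.comp (differentiableOn_const _ |>.mul differentiableOn_id)
    (mapsTo_mul_pow_ball hζ hn j)

theorem norm_rotationAverage_lt (hζ : IsPrimitiveRoot ζ n) (hn : n ≠ 0) {M : ℝ}
    (hf : ∀ z ∈ ball 0 R, ‖f z‖ < M) {z : ℂ} (hz : z ∈ ball 0 R) :
    ‖rotationAverage ζ n f z‖ < M := by
  have hsum : ‖∑ j ∈ range n, f (ζ ^ j * z)‖ < n * M :=
    calc ‖∑ j ∈ range n, f (ζ ^ j * z)‖
      _ ≤ ∑ j ∈ range n, ‖f (ζ ^ j * z)‖ := norm_sum_le _ _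
      _ < ∑ j ∈ range n, M :=
        sum_lt_sum_of_nonempty (nonempty_range_iff.2 hn) fun j _ ↦
          hf _ (mapsTo_mul_pow_ball hζ hn j hz)
      _ = n * M := by simp
  have hn' : (0 : ℝ) < n := by positivity
  rw [rotationAverage, norm_mul, norm_inv, norm_natCast, inv_mul_lt_iff₀ hn']
  exact hsum

theorem iteratedDeriv_rotationAverage_zero (hζ : IsPrimitiveRoot ζ n) (hn : n ≠ 0)
    (hR : 0 < R) (hf : DifferentiableOn ℂ f (ball 0 R)) (k : ℕ) :
    iteratedDeriv k (rotationAverage ζ n f) 0 = if n ∣ k then iteratedDeriv k f 0 else 0 := by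
  have hterm (j : ℕ) : ContDiffAt ℂ k (fun z ↦ f (ζ ^ j * z)) 0 :=
    ((hf.comp (differentiableOn_const _ |>.mul differentiableOn_id)
      (mapsTo_mul_pow_ball hζ hn j)).contDiffOn isOpen_ball).contDiffAt (ball_mem_nhds 0 hR)
  have hζj (j : ℕ) : ‖ζ ^ j‖ ≤ 1 := by simp [norm_pow, hζ.norm'_eq_one hn]
  unfold rotationAverage
  rw [iteratedDeriv_const_mul_field, iteratedDeriv_fun_sum fun j _ ↦ hterm j]
  simp_rw [iteratedDeriv_comp_const_mul_zero hR hf (hζj _), ← sum_mul,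
    hζ.sum_range_pow_pow_eq]
  split_ifs <;> simp [hn]

end rotationAverage

theorem norm_iteratedDeriv_le_of_iteratedDeriv_eq_zero {g : ℂ → ℂ}
    (hg : DifferentiableOn ℂ g (ball 0 1)) (hg1 : ∀ z ∈ ball 0 1, ‖g z‖ < 1) {n : ℕ}
    (hn : 0 < n) (hgap : ∀ i, 0 < i → i < n → iteratedDeriv i g 0 = 0) :
    ‖iteratedDeriv n g 0‖ ≤ n ! * (1 - ‖g 0‖ ^ 2) := by
  set u : ℂ → ℂ := fun z ↦ g z - g 0
  set v : ℂ → ℂ := fun z ↦ (1 - conj (g 0) * g z)⁻¹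
  have hg0 : ‖g 0‖ < 1 := hg1 0 (mem_ball_self one_pos)
  have hden (z : ℂ) (hz : z ∈ ball 0 1) : 1 - conj (g 0) * g z ≠ 0 :=
    one_sub_conj_mul_ne_zero hg0 (hg1 z hz).le
  have hu : DifferentiableOn ℂ u (ball 0 1) := hg.sub_const _
  have hv : DifferentiableOn ℂ v (ball 0 1) :=
    ((differentiableOn_const _).sub ((differentiableOn_const _).mul hg)).inv hden
  have hcontDiffAt {F : ℂ → ℂ} (hF : DifferentiableOn ℂ F (ball 0 1)) (m : ℕ) :
      ContDiffAt ℂ m F 0 :=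
    (hF.contDiffOn isOpen_ball).contDiffAt (ball_mem_nhds 0 one_pos)
  have hbound (z : ℂ) (hz : z ∈ ball 0 1) : ‖(u * v) z‖ ≤ 1 := by
    rw [Pi.mul_apply, norm_mul, norm_inv, ← div_eq_mul_inv,
      div_le_one (norm_pos_iff.2 (hden z hz))]
    exact norm_sub_le_norm_one_sub_conj_mul hg0.le (hg1 z hz).le
  have hu_deriv (i : ℕ) (hi : 0 < i) : iteratedDeriv i u 0 = iteratedDeriv i g 0 := by
    rw [iteratedDeriv_fun_sub (hcontDiffAt hg i) contDiffAt_const, iteratedDeriv_const,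
      if_neg hi.ne', sub_zero]
  have hv0 : v 0 = ((1 - ‖g 0‖ ^ 2 : ℝ) : ℂ)⁻¹ := by
    simp [v, conj_mul']
  have hleibniz :
      iteratedDeriv n (u * v) 0 = iteratedDeriv n g 0 * ((1 - ‖g 0‖ ^ 2 : ℝ) : ℂ)⁻¹ := by
    rw [iteratedDeriv_mul_eq_of_iteratedDeriv_eq_zero (hcontDiffAt hu n) (hcontDiffAt hv n),
      hu_deriv n hn, hv0]
    intro i hi
    rcases i.eq_zero_or_pos with rfl | hi0
    · simp [u]
    · rw [hu_deriv i hi0, hgap i hi0 hi]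
  have hcauchy := norm_iteratedDeriv_le_of_forall_mem_ball_norm_le one_pos (hu.mul hv) hbound n
  have hpos : 0 < 1 - ‖g 0‖ ^ 2 := by nlinarith [norm_nonneg (g 0)]
  rw [hleibniz, norm_mul, norm_inv, norm_real, Real.norm_of_nonneg hpos.le, ← div_eq_mul_inv,
    div_le_iff₀ hpos, one_pow, div_one, mul_one] at hcauchy
  exact hcauchy

theorem stmt_5 (f : ℂ → ℂ) (hf : DifferentiableOn ℂ f (ball (0:ℂ) 1))
    (hmap : ∀ z ∈ ball (0:ℂ) 1, ‖f z‖ < 1)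
    (a : ℕ → ℂ) (ha : ∀ n, a n = iteratedDeriv n f 0 / (Nat.factorial n)) :
    ∀ n : ℕ, 1 ≤ n → ‖a n‖ ≤ 1 - ‖a 0‖ ^ 2 := by
  intro n hn
  have hn0 : n ≠ 0 := Nat.one_le_iff_ne_zero.1 hn
  obtain ⟨ζ, hζ⟩ : ∃ ζ : ℂ, IsPrimitiveRoot ζ n := ⟨_, isPrimitiveRoot_exp n hn0⟩
  have hderiv := iteratedDeriv_rotationAverage_zero hζ hn0 one_pos hf
  have key := norm_iteratedDeriv_le_of_iteratedDeriv_eq_zero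
    (differentiableOn_rotationAverage hζ hn0 hf)
    (fun z hz ↦ norm_rotationAverage_lt hζ hn0 hmap hz) hn
    fun i hi0 hin ↦ by rw [hderiv, if_neg (Nat.not_dvd_of_pos_of_lt hi0 hin)]
  have hcenter : rotationAverage ζ n f 0 = f 0 := by
    simpa only [iteratedDeriv_zero, if_pos (dvd_zero n)] using hderiv 0
  have ha0 : a 0 = f 0 := by simp [ha]
  rw [hderiv, if_pos dvd_rfl, hcenter] at key
  rw [ha, ha0, norm_div, norm_natCast, div_le_iff₀ (by positivity), mul_comm]
  exact key
end

section
/- Let f(z) = z + a_2 z² + a_3 z³ + ⋯ be holomorphic on the unit disk D with f'(z) ≠ 0 on D and Re(1 + z f''(z)/f'(z)) ≥ 0 for all z ∈ D (f is convex). Then |a_3 - (2/3) a_2²| ≤ 1/3. -/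
/-!
For a convex `f`, the function `p z = 1 + z f''(z) / f'(z)` has nonnegative real part,
`p 0 = 1`, and `p z = 1 + 2 a₂ z + 6 (a₃ - 2/3 a₂²) z² + ⋯`. So the bound is Carathéodory's
coefficient estimate `|pₙ| ≤ 2 Re p(0)` for `n = 2`. On the circle `|z - c| = r`, the average of
`(z - c)⁻ⁿ p` is `pₙ rⁿ`, while the average of `(z - c)⁻ⁿ conj p` is the conjugate of the average of
`(z - c)ⁿ p`, which vanishes by the mean value property. Adding the two gives
`pₙ rⁿ = 2 avg ((z - c)⁻ⁿ Re p)`, whose modulus is at most `2 r⁻ⁿ avg (Re p) = 2 r⁻ⁿ Re p(c)`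
because `Re p ≥ 0`. Finally let `r` tend to the radius of the disc.
-/

open Complex Metric Real
open scoped Nat ComplexConjugate Topology

namespace Real

theorem norm_circleAverage_le_circleAverage_norm {E : Type*} [NormedAddCommGroup E]
    [NormedSpace ℝ E] (f : ℂ → E) (c : ℂ) (R : ℝ) :
    ‖circleAverage f c R‖ ≤ circleAverage (fun z ↦ ‖f z‖) c R := by
  simp only [circleAverage_def, norm_smul, smul_eq_mul]
  rw [norm_inv, Real.norm_of_nonneg two_pi_pos.le]
  gcongr
  exact intervalIntegral.norm_integral_le_integral_norm two_pi_pos.le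

end Real

namespace DiffContOnCl

variable {g : ℂ → ℂ} {c : ℂ} {R : ℝ}

theorem circleAverage_inv_pow_mul (hg : DiffContOnCl ℂ g (ball c R)) (hR : 0 < R) (n : ℕ) :
    Real.circleAverage (fun z ↦ ((z - c) ^ n)⁻¹ * g z) c R = iteratedDeriv n g c / n ! := by
  rw [circleAverage_eq_circleIntegral hR.ne']
  have hcauchy := hg.circleIntegral_one_div_sub_center_pow_smul hR n
  calc (2 * π * I)⁻¹ • ∮ z in C(c, R), (z - c)⁻¹ • (((z - c) ^ n)⁻¹ * g z)
      = (2 * π * I)⁻¹ • ∮ z in C(c, R), (1 / (z - c) ^ (n + 1)) • g z := by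
        congr 1
        refine circleIntegral.integral_congr hR.le fun z _ ↦ ?_
        simp only [smul_eq_mul, pow_succ]
        field_simp
    _ = iteratedDeriv n g c / n ! := by
        rw [hcauchy, smul_smul, smul_eq_mul]
        field_simp [two_pi_I_ne_zero]

theorem circleAverage_pow_mul_eq_zero (hg : DiffContOnCl ℂ g (ball c R)) (hR : 0 < R)
    {n : ℕ} (hn : n ≠ 0) :
    Real.circleAverage (fun z ↦ (z - c) ^ n * g z) c R = 0 := by
  have h : DiffContOnCl ℂ (fun z ↦ (z - c) ^ n * g z) (ball c |R|) := by
    rw [abs_of_pos hR]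
    exact ((differentiable_id.sub_const c).pow n).diffContOnCl.smul hg
  simp [h.circleAverage, hn]

theorem circleAverage_inv_pow_mul_conj_eq_zero (hg : DiffContOnCl ℂ g (ball c R)) (hR : 0 < R)
    {n : ℕ} (hn : n ≠ 0) :
    Real.circleAverage (fun z ↦ ((z - c) ^ n)⁻¹ * conj (g z)) c R = 0 := by
  -- on the circle, `w⁻¹ = conj w / |w|²` with `|w| = R`
  have hsphere : Set.EqOn (fun z ↦ ((z - c) ^ n)⁻¹ * conj (g z))
      (fun z ↦ ((R ^ (2 * n) : ℝ) : ℂ)⁻¹ • conjCLE ((z - c) ^ n * g z)) (sphere c |R|) := by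
    intro z hz
    rw [abs_of_pos hR, mem_sphere_iff_norm] at hz
    dsimp only
    rw [inv_def ((z - c) ^ n), normSq_eq_norm_sq, norm_pow, hz]
    simp only [conjCLE_apply, map_mul, map_pow, smul_eq_mul, ofReal_inv, ofReal_pow]
    ring
  have hint : CircleIntegrable (fun z ↦ (z - c) ^ n * g z) c R :=
    (((continuous_id.sub continuous_const).pow n).continuousOn.mul
      (hg.continuousOn_ball.mono sphere_subset_closedBall)).circleIntegrable hR.le
  rw [Real.circleAverage_congr_sphere hsphere, Real.circleAverage_fun_smul]
  have := conjCLE.toContinuousLinearMap.circleAverage_comp_comm hint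
  simp only [ContinuousLinearEquiv.coe_coe] at this
  rw [show (fun z ↦ conjCLE ((z - c) ^ n * g z)) = conjCLE ∘ (fun z ↦ (z - c) ^ n * g z) from
    rfl, this, hg.circleAverage_pow_mul_eq_zero hR hn, map_zero, smul_zero]

theorem iteratedDeriv_div_factorial_eq_two_mul_circleAverage_re
    (hg : DiffContOnCl ℂ g (ball c R)) (hR : 0 < R) {n : ℕ} (hn : n ≠ 0) :
    iteratedDeriv n g c / n ! =
      2 * Real.circleAverage (fun z ↦ ((z - c) ^ n)⁻¹ * ((g z).re : ℂ)) c R := by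
  have hg_cont : ContinuousOn g (sphere c R) := hg.continuousOn_ball.mono sphere_subset_closedBall
  have hinv_cont : ContinuousOn (fun z ↦ ((z - c) ^ n)⁻¹) (sphere c R) :=
    ((continuous_id.sub continuous_const).pow n).continuousOn.inv₀ fun z hz ↦
      pow_ne_zero n (sub_ne_zero.2 (ne_of_mem_sphere hz hR.ne'))
  calc iteratedDeriv n g c / n !
      = Real.circleAverage (fun z ↦ ((z - c) ^ n)⁻¹ * g z) c R
        + Real.circleAverage (fun z ↦ ((z - c) ^ n)⁻¹ * conj (g z)) c R := by
        rw [hg.circleAverage_inv_pow_mul hR, hg.circleAverage_inv_pow_mul_conj_eq_zero hR hn,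
          add_zero]
    _ = Real.circleAverage (fun z ↦ (2 : ℂ) • (((z - c) ^ n)⁻¹ * ((g z).re : ℂ))) c R := by
        have hint : CircleIntegrable (fun z ↦ ((z - c) ^ n)⁻¹ * g z) c R :=
          (hinv_cont.mul hg_cont).circleIntegrable hR.le
        have hint_conj : CircleIntegrable (fun z ↦ ((z - c) ^ n)⁻¹ * conj (g z)) c R :=
          (hinv_cont.mul (continuous_conj.comp_continuousOn hg_cont)).circleIntegrable hR.le
        rw [← Real.circleAverage_fun_add hint hint_conj]
        congr 1
        ext z
        rw [← mul_add, add_conj, smul_eq_mul]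
        push_cast
        ring
    _ = _ := by rw [Real.circleAverage_fun_smul, smul_eq_mul]

theorem norm_iteratedDeriv_div_factorial_mul_pow_le (hg : DiffContOnCl ℂ g (ball c R))
    (hR : 0 < R) {n : ℕ} (hn : n ≠ 0) (hre : ∀ z ∈ sphere c R, 0 ≤ (g z).re) :
    ‖iteratedDeriv n g c / (n !)‖ * R ^ n ≤ 2 * (g c).re := by
  have hsphere : Set.EqOn (fun z ↦ ‖((z - c) ^ n)⁻¹ * ((g z).re : ℂ)‖)
      (fun z ↦ (R ^ n)⁻¹ • (g z).re) (sphere c |R|) := by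
    intro z hz
    rw [abs_of_pos hR] at hz
    simp [norm_pow, mem_sphere_iff_norm.1 hz, abs_of_nonneg (hre z hz)]
  have hmean : Real.circleAverage (fun z ↦ (g z).re) c R = (g c).re := by
    have hint : CircleIntegrable g c R :=
      (hg.continuousOn_ball.mono sphere_subset_closedBall).circleIntegrable hR.le
    have := reCLM.circleAverage_comp_comm hint
    rw [← abs_of_pos hR] at hg
    simp only [reCLM_apply, hg.circleAverage] at this
    exact this
  calc ‖iteratedDeriv n g c / (n !)‖ * R ^ n
      ≤ 2 * Real.circleAverage (fun z ↦ ‖((z - c) ^ n)⁻¹ * ((g z).re : ℂ)‖) c R * R ^ n := by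
        rw [hg.iteratedDeriv_div_factorial_eq_two_mul_circleAverage_re hR hn, norm_mul,
          Complex.norm_two]
        gcongr
        exact Real.norm_circleAverage_le_circleAverage_norm _ c R
    _ = 2 * (g c).re := by
        rw [Real.circleAverage_congr_sphere hsphere, Real.circleAverage_fun_smul, hmean,
          smul_eq_mul]
        field_simp

end DiffContOnCl

theorem DifferentiableOn.norm_iteratedDeriv_div_factorial_mul_pow_le {g : ℂ → ℂ} {c : ℂ}
    {R : ℝ} (hg : DifferentiableOn ℂ g (ball c R)) (hR : 0 < R) {n : ℕ} (hn : n ≠ 0)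
    (hre : ∀ z ∈ ball c R, 0 ≤ (g z).re) :
    ‖iteratedDeriv n g c / (n !)‖ * R ^ n ≤ 2 * (g c).re := by
  have hr : ∀ r ∈ Set.Ioo 0 R, ‖iteratedDeriv n g c / (n !)‖ * r ^ n ≤ 2 * (g c).re :=
    fun r hr ↦ DiffContOnCl.norm_iteratedDeriv_div_factorial_mul_pow_le
      (hg.diffContOnCl_ball (closedBall_subset_ball hr.2)) hr.1 hn
      fun z hz ↦ hre z (closedBall_subset_ball hr.2 (sphere_subset_closedBall hz))
  have hlim : Filter.Tendsto (fun r ↦ ‖iteratedDeriv n g c / (n !)‖ * r ^ n) (𝓝[<] R)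
      (𝓝 (‖iteratedDeriv n g c / (n !)‖ * R ^ n)) :=
    ((continuous_const.mul (continuous_pow n)).tendsto R).mono_left nhdsWithin_le_nhds
  exact le_of_tendsto hlim (Filter.eventually_of_mem (Ioo_mem_nhdsLT hR) hr)

section Taylor

variable {𝕜 : Type*} [NontriviallyNormedField 𝕜]

theorem iteratedDeriv_succ_fun_id_mul_zero {q : 𝕜 → 𝕜} {n : ℕ} (hq : ContDiffAt 𝕜 (n + 1) q 0) :
    iteratedDeriv (n + 1) (fun z ↦ z * q z) 0 = (n + 1) * iteratedDeriv n q 0 := by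
  rw [iteratedDeriv_fun_mul (f := fun z ↦ z) contDiffAt_id hq, Finset.sum_eq_single 1]
  · simp [iteratedDeriv_fun_id_zero]
  · intro i _ hi
    simp [iteratedDeriv_fun_id_zero, hi]
  · simp

theorem deriv_iteratedDeriv_two_div_deriv [CompleteSpace 𝕜] {f : 𝕜 → 𝕜} {x : 𝕜}
    (hf : AnalyticAt 𝕜 f x) (hx : deriv f x ≠ 0) :
    deriv (fun z ↦ iteratedDeriv 2 f z / deriv f z) x =
      (iteratedDeriv 3 f x * deriv f x - iteratedDeriv 2 f x ^ 2) / deriv f x ^ 2 := by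
  have h2 : iteratedDeriv 2 f = deriv (deriv f) := by
    rw [iteratedDeriv_succ, iteratedDeriv_one]
  have h3 : iteratedDeriv 3 f = deriv (iteratedDeriv 2 f) := iteratedDeriv_succ
  rw [deriv_fun_div (h2 ▸ hf.deriv.deriv.differentiableAt) hf.deriv.differentiableAt hx, h3, h2]
  ring

end Taylor

theorem stmt_7_general (f : ℂ → ℂ) (hf : DifferentiableOn ℂ f (ball (0:ℂ) 1))
    (h1 : deriv f 0 = 1)
    (hf' : ∀ z ∈ ball (0:ℂ) 1, deriv f z ≠ 0)
    (a : ℕ → ℂ) (ha : ∀ n, a n = iteratedDeriv n f 0 / (Nat.factorial n))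
    (hconv : ∀ z ∈ ball (0:ℂ) 1,
      0 ≤ (1 + z * iteratedDeriv 2 f z / deriv f z).re) :
    ‖a 3 - (2/3 : ℂ) * a 2 ^ 2‖ ≤ 1/3 := by
  have hfa : AnalyticOnNhd ℂ f (ball 0 1) := hf.analyticOnNhd isOpen_ball
  have hf0 : AnalyticAt ℂ f 0 := hfa 0 (mem_ball_self one_pos)
  set q : ℂ → ℂ := fun z ↦ iteratedDeriv 2 f z / deriv f z with hq_def
  have hq : AnalyticOnNhd ℂ q (ball 0 1) := fun z hz ↦ by
    have := ((hfa z hz).iterated_deriv 2).fun_div (hfa z hz).deriv (hf' z hz)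
    rwa [← iteratedDeriv_eq_iterate] at this
  have hp : DifferentiableOn ℂ (fun z ↦ 1 + z * q z) (ball 0 1) :=
    (differentiableOn_id.mul hq.differentiableOn).const_add 1
  have hbound := hp.norm_iteratedDeriv_div_factorial_mul_pow_le one_pos two_ne_zero
    (by simpa only [hq_def, mul_div_assoc] using hconv)
  have hq2 : iteratedDeriv 2 (fun z ↦ z * q z) 0 = 2 * deriv q 0 := by
    simpa [one_add_one_eq_two] using
      iteratedDeriv_succ_fun_id_mul_zero (n := 1) (hq 0 (mem_ball_self one_pos)).contDiffAt
  rw [iteratedDeriv_const_add two_pos, hq2,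
    deriv_iteratedDeriv_two_div_deriv hf0 (h1 ▸ one_ne_zero), h1] at hbound
  have hval :
      a 3 - (2/3 : ℂ) * a 2 ^ 2 = (iteratedDeriv 3 f 0 - iteratedDeriv 2 f 0 ^ 2) / 6 := by
    rw [ha 3, ha 2]
    norm_num [Nat.factorial]
    ring
  norm_num at hbound
  rw [hval, norm_div, RCLike.norm_ofNat]
  linarith

theorem stmt_7 (f : ℂ → ℂ) (hf : DifferentiableOn ℂ f (ball (0:ℂ) 1))
    (h0 : f 0 = 0) (h1 : deriv f 0 = 1)
    (hf' : ∀ z ∈ ball (0:ℂ) 1, deriv f z ≠ 0)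
    (a : ℕ → ℂ) (ha : ∀ n, a n = iteratedDeriv n f 0 / (Nat.factorial n))
    (hconv : ∀ z ∈ ball (0:ℂ) 1,
      0 ≤ (1 + z * iteratedDeriv 2 f z / deriv f z).re) :
    ‖a 3 - (2/3 : ℂ) * a 2 ^ 2‖ ≤ 1/3 :=
  stmt_7_general f hf h1 hf' a ha hconv
end

section
/- Let 0 ≤ α < 1 and let f(z) = z + a_2 z² + a_3 z³ + ⋯ be holomorphic on D with f' nonvanishing and Re(1 + z f''(z)/f'(z)) ≥ α on D (f convex of order α). Then |a_3| ≤ (1-α)(3-2α)/3. -/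
/-!
Put `s(z) = z f''(z) / f'(z)`. By hypothesis `Re (1 + s) ≥ α` on the disc, so Carathéodory's lemma
bounds the Taylor coefficients of `s` by `2 (1 - α)`. Comparing coefficients in
`z f''(z) = s(z) f'(z)` gives `6 a₃ = s''(0) / 2 + s'(0)²`, and the triangle inequality yields
`|a₃| ≤ (2 (1 - α) + 4 (1 - α)²) / 6 = (1 - α)(3 - 2α) / 3`.

Carathéodory's lemma: for `n ≥ 1` and `Re p ≥ 0` on the circle `|z| = r`, the `n`-th Taylor
coefficient of `p` is the circle average of `z⁻ⁿ (p + p̄) = z⁻ⁿ · 2 Re p`, because on that circle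
`z⁻ⁿ p̄(z)` is the conjugate of `r⁻²ⁿ zⁿ p(z)`, whose average vanishes by the mean value property.
Hence `|cₙ| rⁿ ≤ 2 · avg (Re p) = 2 Re p(0)`; let `r → 1`.
-/

open Complex ComplexConjugate Metric Real Filter Topology

theorem norm_circleAverage_le {E : Type*} [NormedAddCommGroup E] [NormedSpace ℝ E]
    (f : ℂ → E) (c : ℂ) (R : ℝ) :
    ‖circleAverage f c R‖ ≤ circleAverage (fun z ↦ ‖f z‖) c R := by
  rw [circleAverage_def, circleAverage_def, norm_smul, smul_eq_mul,
    Real.norm_of_nonneg (by positivity)]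
  gcongr
  exact intervalIntegral.norm_integral_le_integral_norm two_pi_pos.le

theorem circleAverage_eq_of_differentiableOn {E : Type*} [NormedAddCommGroup E]
    [NormedSpace ℂ E] [CompleteSpace E] {f : ℂ → E} {c : ℂ} {R : ℝ} (hR : 0 ≤ R)
    (hf : DifferentiableOn ℂ f (closedBall c R)) :
    circleAverage f c R = f c := by
  rw [← abs_of_nonneg hR] at hf
  exact (hf.mono closure_ball_subset_closedBall).diffContOnCl.circleAverage

section Caratheodory

variable {p : ℂ → ℂ} {r : ℝ}

theorem circleAverage_inv_pow_mul_eq_iteratedDeriv (hr : 0 < r)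
    (hp : DifferentiableOn ℂ p (closedBall 0 r)) (n : ℕ) :
    circleAverage (fun z ↦ z⁻¹ ^ n * p z) 0 r = iteratedDeriv n p 0 / n.factorial := by
  rw [circleAverage_eq_circleIntegral hr.ne']
  have hcauchy := hp.circleIntegral_one_div_sub_center_pow_smul hr n
  simp only [sub_zero, smul_eq_mul] at hcauchy ⊢
  rw [show (fun z : ℂ ↦ z⁻¹ * (z⁻¹ ^ n * p z)) = fun z ↦ 1 / z ^ (n + 1) * p z by
    ext z; rw [← mul_assoc, ← pow_succ', inv_pow, one_div], hcauchy]
  field_simp [two_pi_I_ne_zero]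

theorem circleAverage_pow_mul_eq_zero (hr : 0 < r)
    (hp : DifferentiableOn ℂ p (closedBall 0 r)) {n : ℕ} (hn : n ≠ 0) :
    circleAverage (fun z ↦ z ^ n * p z) 0 r = 0 := by
  simpa [hn] using
    circleAverage_eq_of_differentiableOn hr.le ((differentiableOn_pow n).fun_mul hp)

theorem circleAverage_inv_pow_mul_conj_eq_zero (hr : 0 < r)
    (hp : DifferentiableOn ℂ p (closedBall 0 r)) {n : ℕ} (hn : n ≠ 0) :
    circleAverage (fun z ↦ z⁻¹ ^ n * conj (p z)) 0 r = 0 := by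
  have hsphere : ∀ z ∈ sphere (0 : ℂ) |r|,
      z⁻¹ ^ n * conj (p z) = ((r : ℂ) ^ 2)⁻¹ ^ n • conj (z ^ n * p z) := by
    intro z hz
    have hzr : ‖z‖ = r := by simpa [abs_of_pos hr] using hz
    have hinv : z⁻¹ = conj z / (r : ℂ) ^ 2 := by
      have hz0 : z ≠ 0 := norm_ne_zero_iff.1 (hzr ▸ hr.ne')
      have hz0' : conj z ≠ 0 := (map_ne_zero _).2 hz0
      rw [← ofReal_pow, ← hzr, ← normSq_eq_norm_sq, ← mul_conj]
      field_simp
    rw [hinv, smul_eq_mul, map_mul, map_pow]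
    ring
  have hint : CircleIntegrable (fun z ↦ z ^ n * p z) 0 r :=
    ((continuousOn_pow n).mul hp.continuousOn |>.mono sphere_subset_closedBall).circleIntegrable
      hr.le
  have hconj : circleAverage (fun z ↦ conj (z ^ n * p z)) 0 r =
      conj (circleAverage (fun z ↦ z ^ n * p z) 0 r) :=
    (conjCLE.toContinuousLinearMap : ℂ →L[ℝ] ℂ).circleAverage_comp_comm hint
  rw [circleAverage_congr_sphere hsphere, circleAverage_fun_smul, hconj,
    circleAverage_pow_mul_eq_zero hr hp hn, map_zero, smul_zero]

theorem iteratedDeriv_div_factorial_eq_circleAverage (hr : 0 < r)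
    (hp : DifferentiableOn ℂ p (closedBall 0 r)) {n : ℕ} (hn : n ≠ 0) :
    iteratedDeriv n p 0 / n.factorial =
      circleAverage (fun z ↦ z⁻¹ ^ n * (2 * (p z).re : ℝ)) 0 r := by
  have hinv : ContinuousOn (fun z : ℂ ↦ z⁻¹ ^ n) (sphere 0 r) :=
    (continuousOn_inv₀.mono fun z hz ↦ ne_zero_of_mem_sphere hr.ne' ⟨z, hz⟩).pow n
  have hpc : ContinuousOn p (sphere 0 r) := hp.continuousOn.mono sphere_subset_closedBall
  have hint : CircleIntegrable (fun z ↦ z⁻¹ ^ n * p z) 0 r :=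
    (hinv.mul hpc).circleIntegrable hr.le
  have hint' : CircleIntegrable (fun z ↦ z⁻¹ ^ n * conj (p z)) 0 r :=
    (hinv.mul (continuous_conj.comp_continuousOn hpc)).circleIntegrable hr.le
  simp_rw [← add_conj, mul_add]
  rw [circleAverage_fun_add hint hint', circleAverage_inv_pow_mul_conj_eq_zero hr hp hn, add_zero,
    circleAverage_inv_pow_mul_eq_iteratedDeriv hr hp]

theorem norm_iteratedDeriv_div_factorial_mul_pow_le_of_re_nonneg_sphere (hr : 0 < r)
    (hp : DifferentiableOn ℂ p (closedBall 0 r)) (hre : ∀ z ∈ sphere 0 r, 0 ≤ (p z).re)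
    {n : ℕ} (hn : n ≠ 0) :
    ‖iteratedDeriv n p 0 / n.factorial‖ * r ^ n ≤ 2 * (p 0).re := by
  have hsphere : ∀ z ∈ sphere (0 : ℂ) |r|,
      ‖z⁻¹ ^ n * (2 * (p z).re : ℝ)‖ = (2 * (r ^ n)⁻¹) • (p z).re := by
    intro z hz
    rw [abs_of_pos hr] at hz
    have hzr : ‖z‖ = r := by simpa using hz
    rw [norm_mul, norm_pow, norm_inv, hzr, norm_real, Real.norm_of_nonneg (by linarith [hre z hz]),
      inv_pow, smul_eq_mul]
    ring
  have hint : CircleIntegrable p 0 r :=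
    (hp.continuousOn.mono sphere_subset_closedBall).circleIntegrable hr.le
  have hmean : circleAverage (fun z ↦ (p z).re) 0 r = (p 0).re := by
    rw [← circleAverage_eq_of_differentiableOn hr.le hp]
    exact reCLM.circleAverage_comp_comm hint
  calc ‖iteratedDeriv n p 0 / n.factorial‖ * r ^ n
      ≤ circleAverage (fun z ↦ ‖z⁻¹ ^ n * (2 * (p z).re : ℝ)‖) 0 r * r ^ n := by
        rw [iteratedDeriv_div_factorial_eq_circleAverage hr hp hn]
        gcongr
        exact norm_circleAverage_le _ _ _
    _ = 2 * (p 0).re := by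
        rw [circleAverage_congr_sphere hsphere, circleAverage_fun_smul, hmean, smul_eq_mul]
        field_simp

theorem norm_iteratedDeriv_div_factorial_mul_pow_le_of_re_nonneg {R : ℝ} (hR : 0 < R)
    (hp : DifferentiableOn ℂ p (ball 0 R)) (hre : ∀ z ∈ ball 0 R, 0 ≤ (p z).re)
    {n : ℕ} (hn : n ≠ 0) :
    ‖iteratedDeriv n p 0 / n.factorial‖ * R ^ n ≤ 2 * (p 0).re := by
  have hlim : Tendsto (fun r : ℝ ↦ ‖iteratedDeriv n p 0 / n.factorial‖ * r ^ n) (𝓝[<] R)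
      (𝓝 (‖iteratedDeriv n p 0 / n.factorial‖ * R ^ n)) :=
    ((continuous_const.mul (continuous_pow n)).tendsto R).mono_left nhdsWithin_le_nhds
  refine le_of_tendsto hlim ?_
  filter_upwards [Ioo_mem_nhdsLT hR] with r hr
  exact norm_iteratedDeriv_div_factorial_mul_pow_le_of_re_nonneg_sphere hr.1
    (hp.mono (closedBall_subset_ball hr.2))
    (fun z hz ↦ hre z (sphere_subset_ball hr.2 hz)) hn

theorem norm_iteratedDeriv_div_factorial_le_of_le_re {q : ℂ → ℂ} {α : ℝ}
    (hq : DifferentiableOn ℂ q (ball 0 1)) (hq0 : q 0 = 1) (hre : ∀ z ∈ ball 0 1, α ≤ (q z).re)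
    {n : ℕ} (hn : n ≠ 0) :
    ‖iteratedDeriv n q 0 / n.factorial‖ ≤ 2 * (1 - α) := by
  have key := norm_iteratedDeriv_div_factorial_mul_pow_le_of_re_nonneg one_pos
    (hq.const_add (-α : ℂ)) (fun z hz ↦ by simpa using hre z hz) hn
  rw [iteratedDeriv_const_add (Nat.pos_of_ne_zero hn), hq0, one_pow, mul_one] at key
  simpa [neg_add_eq_sub] using key

end Caratheodory

section Leibniz

variable {𝕜 : Type*} [NontriviallyNormedField 𝕜] [CompleteSpace 𝕜]

theorem iteratedDeriv_two_fun_mul {u v : 𝕜 → 𝕜} {x : 𝕜} (hu : AnalyticAt 𝕜 u x)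
    (hv : AnalyticAt 𝕜 v x) :
    iteratedDeriv 2 (fun y ↦ u y * v y) x =
      iteratedDeriv 2 u x * v x + 2 * deriv u x * deriv v x + u x * iteratedDeriv 2 v x := by
  have hderiv : deriv (fun y ↦ u y * v y) =ᶠ[𝓝 x] fun y ↦ deriv u y * v y + u y * deriv v y := by
    filter_upwards [hu.eventually_analyticAt, hv.eventually_analyticAt] with y huy hvy
    exact deriv_fun_mul huy.differentiableAt hvy.differentiableAt
  simp only [iteratedDeriv_succ', iteratedDeriv_zero]
  rw [hderiv.deriv_eq, deriv_fun_add (hu.deriv.differentiableAt.fun_mul hv.differentiableAt)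
      (hu.differentiableAt.fun_mul hv.deriv.differentiableAt),
    deriv_fun_mul hu.deriv.differentiableAt hv.differentiableAt,
    deriv_fun_mul hu.differentiableAt hv.deriv.differentiableAt]
  ring

theorem iteratedDeriv_two_eq_of_id_mul_deriv_eq_mul {g s : 𝕜 → 𝕜} (hg : AnalyticAt 𝕜 g 0)
    (hs : AnalyticAt 𝕜 s 0) (hg0 : g 0 = 1)
    (h : (fun z ↦ z * deriv g z) =ᶠ[𝓝 0] fun z ↦ s z * g z) :
    2 * iteratedDeriv 2 g 0 = iteratedDeriv 2 s 0 + 2 * deriv s 0 ^ 2 := by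
  have hs0 : s 0 = 0 := by simpa [hg0] using h.eq_of_nhds.symm
  have hfirst : deriv g 0 = deriv s 0 := by
    have := h.deriv_eq
    rw [deriv_fun_mul differentiableAt_fun_id hg.deriv.differentiableAt,
      deriv_fun_mul hs.differentiableAt hg.differentiableAt, hs0, hg0] at this
    simpa using this
  have hsecond := h.iteratedDeriv_eq 2
  rw [iteratedDeriv_two_fun_mul (u := fun z ↦ z) analyticAt_id hg.deriv,
    iteratedDeriv_two_fun_mul hs hg, hs0, hg0] at hsecond
  simp only [iteratedDeriv_succ', iteratedDeriv_zero, deriv_id'', deriv_const'] at hsecond ⊢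
  rw [← hfirst] at hsecond ⊢
  linear_combination hsecond

theorem stmt_15_general (α : ℝ)
    (f : ℂ → ℂ) (hf : DifferentiableOn ℂ f (ball (0:ℂ) 1))
    (h1 : deriv f 0 = 1)
    (hf' : ∀ z ∈ ball (0:ℂ) 1, deriv f z ≠ 0)
    (a : ℕ → ℂ) (ha : ∀ n, a n = iteratedDeriv n f 0 / (Nat.factorial n))
    (hconv : ∀ z ∈ ball (0:ℂ) 1,
      α ≤ (1 + z * iteratedDeriv 2 f z / deriv f z).re) :
    ‖a 3‖ ≤ (1 - α) * (3 - 2 * α) / 3 := by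
  have hf'' : AnalyticOnNhd ℂ (deriv f) (ball 0 1) := (hf.analyticOnNhd isOpen_ball).deriv
  have hiter2 : iteratedDeriv 2 f = deriv (deriv f) := by
    simp only [iteratedDeriv_succ', iteratedDeriv_zero]
  set s : ℂ → ℂ := fun z ↦ z * iteratedDeriv 2 f z / deriv f z with hs_def
  have hs : AnalyticOnNhd ℂ s (ball 0 1) := by
    rw [hs_def, hiter2]
    exact (analyticOnNhd_id.mul hf''.deriv).div hf'' hf'
  have hmem : (0 : ℂ) ∈ ball 0 1 := mem_ball_self one_pos
  have hcoeff := iteratedDeriv_two_eq_of_id_mul_deriv_eq_mul (hf'' 0 hmem) (hs 0 hmem) h1 <| by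
    filter_upwards [isOpen_ball.mem_nhds hmem] with z hz
    rw [hs_def, hiter2]
    field_simp [hf' z hz]
  have hbound {n : ℕ} (hn : n ≠ 0) : ‖iteratedDeriv n s 0 / n.factorial‖ ≤ 2 * (1 - α) := by
    rw [← iteratedDeriv_const_add (Nat.pos_of_ne_zero hn) 1]
    exact norm_iteratedDeriv_div_factorial_le_of_le_re (hs.differentiableOn.const_add 1)
      (by simp [hs_def]) hconv hn
  have hc1 : ‖deriv s 0‖ ≤ 2 * (1 - α) := by simpa using hbound one_ne_zero
  have hc2 : ‖iteratedDeriv 2 s 0 / 2‖ ≤ 2 * (1 - α) := by simpa using hbound two_ne_zero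
  have ha3 : a 3 = (iteratedDeriv 2 s 0 / 2 + deriv s 0 ^ 2) / 6 := by
    rw [ha, iteratedDeriv_succ', show ((Nat.factorial 3 : ℕ) : ℂ) = 6 by norm_num [Nat.factorial]]
    linear_combination hcoeff / 12
  calc ‖a 3‖ ≤ (‖iteratedDeriv 2 s 0 / 2‖ + ‖deriv s 0‖ ^ 2) / 6 := by
        rw [ha3, norm_div, Complex.norm_ofNat, ← norm_pow]
        gcongr
        exact norm_add_le _ _
    _ ≤ (2 * (1 - α) + (2 * (1 - α)) ^ 2) / 6 := by gcongr
    _ = (1 - α) * (3 - 2 * α) / 3 := by ring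

theorem stmt_15 (α : ℝ) (hα0 : 0 ≤ α) (hα1 : α < 1)
    (f : ℂ → ℂ) (hf : DifferentiableOn ℂ f (ball (0:ℂ) 1))
    (h0 : f 0 = 0) (h1 : deriv f 0 = 1)
    (hf' : ∀ z ∈ ball (0:ℂ) 1, deriv f z ≠ 0)
    (a : ℕ → ℂ) (ha : ∀ n, a n = iteratedDeriv n f 0 / (Nat.factorial n))
    (hconv : ∀ z ∈ ball (0:ℂ) 1,
      α ≤ (1 + z * iteratedDeriv 2 f z / deriv f z).re) :
    ‖a 3‖ ≤ (1 - α) * (3 - 2 * α) / 3 :=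
  stmt_15_general α f hf h1 hf' a ha hconv
end Leibniz
end
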